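/- Strong duality for the inner maximization: for a probability vector w with positive entries, rho > 0, and cost vector c in R^m, max { \hat{w}^T c : \hat{w} >= 0, \hat{w}^T e = 1, I_KL(\hat{w}, w) <= rho } = min_{lambda >= 0, eta} { eta + rho*lambda + lambda \sum_i w_i phi*((c_i - eta)/lambda) }, where phi*(s) = e^s - 1 is the convex conjugate of the KL divergence generator phi(t) = t log t - t + 1. -/
import Mathlib

private lemma young_aux (t s : ℝ) (ht : 0 ≤ t) :
    t * s ≤ t * Real.log t - t + Real.exp s := by
  rcases eq_or_lt_of_le ht with h | h
  · rw [← h]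
    simpa using (Real.exp_pos s).le
  · have h1 : (s - Real.log t) + 1 ≤ Real.exp (s - Real.log t) :=
      Real.add_one_le_exp _
    rw [Real.exp_sub, Real.exp_log h] at h1
    have h3 := mul_le_mul_of_nonneg_left h1 h.le
    have h4 : t * (Real.exp s / t) = Real.exp s := by field_simp
    nlinarith

private lemma xlog_aux (x w : ℝ) (hx : 0 < x) (hw : 0 < w) :
    x - w ≤ x * Real.log (x / w) := by
  have h := Real.log_le_sub_one_of_pos (show 0 < w / x by positivity)
  have hlog : Real.log (w / x) = - Real.log (x / w) := by
    rw [← Real.log_inv]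
    congr 1
    field_simp
  rw [hlog] at h
  have h2 := mul_le_mul_of_nonneg_left h hx.le
  have h3 : x * (w / x - 1) = w - x := by field_simp
  nlinarith

/-- Strong duality (Ben-Tal et al.) for the inner maximization of the
Robust Tuning problem: the worst-case cost over the KL-divergence
uncertainty region equals the infimum of the Lagrangian dual objective
`η + ρλ + λ ∑ᵢ wᵢ φ*((cᵢ - η)/λ)` with `φ*(s) = eˢ - 1`. -/
theorem robust_strong_duality (m : ℕ) (hm : 1 ≤ m) (w c : Fin m → ℝ)
    (hw : ∀ i, 0 < w i) (hws : ∑ i, w i = 1) (ρ : ℝ) (hρ : 0 < ρ) :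
    sSup {v : ℝ | ∃ x : Fin m → ℝ,
        (∀ i, 0 ≤ x i) ∧ ∑ i, x i = 1 ∧
          (∑ i, x i * Real.log (x i / w i)) ≤ ρ ∧
          v = ∑ i, x i * c i} =
      sInf {v : ℝ | ∃ lam η : ℝ, 0 < lam ∧
        v = η + ρ * lam +
          lam * ∑ i, w i * (Real.exp ((c i - η) / lam) - 1)} := by
  set S : Set ℝ := {v : ℝ | ∃ x : Fin m → ℝ,
        (∀ i, 0 ≤ x i) ∧ ∑ i, x i = 1 ∧
          (∑ i, x i * Real.log (x i / w i)) ≤ ρ ∧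
          v = ∑ i, x i * c i} with hSdef
  set D : Set ℝ := {v : ℝ | ∃ lam η : ℝ, 0 < lam ∧
        v = η + ρ * lam +
          lam * ∑ i, w i * (Real.exp ((c i - η) / lam) - 1)} with hDdef
  have hneF : (Finset.univ : Finset (Fin m)).Nonempty := ⟨⟨0, hm⟩, Finset.mem_univ _⟩
  -- the partition function, numerator, primal value / λ minus log Z (= KL of Gibbs meas.)
  set Z : ℝ → ℝ := fun lam => ∑ i, w i * Real.exp (c i / lam) with hZdef
  set P : ℝ → ℝ := fun lam => ∑ i, w i * Real.exp (c i / lam) * c i with hPdef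
  set K : ℝ → ℝ := fun lam => P lam / (lam * Z lam) - Real.log (Z lam) with hKdef
  have hZpos : ∀ lam : ℝ, 0 < Z lam := by
    intro lam
    exact Finset.sum_pos (fun i _ => mul_pos (hw i) (Real.exp_pos _)) hneF
  -- weak duality
  have hweak : ∀ a ∈ S, ∀ b ∈ D, a ≤ b := by
    rintro a ⟨x, hx0, hxs, hxkl, rfl⟩ b ⟨lam, η, hlam, rfl⟩
    have key : ∀ i, x i * (c i - η) ≤
        lam * (x i * Real.log (x i / w i) - x i + w i * Real.exp ((c i - η) / lam)) := by
      intro i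
      rcases eq_or_lt_of_le (hx0 i) with h0 | h0
      · rw [← h0]
        have hwi := hw i
        have h5 : (0:ℝ) ≤ lam * (w i * Real.exp ((c i - η) / lam)) :=
          le_of_lt (by positivity)
        simpa using h5
      · have hwi := hw i
        have hy := young_aux (x i / w i) ((c i - η) / lam) (by positivity)
        have hmul := mul_le_mul_of_nonneg_left hy (show (0:ℝ) ≤ lam * w i by positivity)
        have e1 : lam * w i * (x i / w i * ((c i - η) / lam)) = x i * (c i - η) := by
          field_simp
        have e2 : lam * w i * (x i / w i * Real.log (x i / w i) - x i / w i +
            Real.exp ((c i - η) / lam)) =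
            lam * (x i * Real.log (x i / w i) - x i + w i * Real.exp ((c i - η) / lam)) := by
          field_simp
        rw [e1, e2] at hmul
        exact hmul
    have hsum : ∑ i, x i * (c i - η) ≤
        ∑ i, lam * (x i * Real.log (x i / w i) - x i + w i * Real.exp ((c i - η) / lam)) :=
      Finset.sum_le_sum fun i _ => key i
    have h1 : ∑ i, x i * (c i - η) = (∑ i, x i * c i) - η := by
      rw [show (fun i => x i * (c i - η)) = fun i => x i * c i - x i * η from by
        funext i; ring]
      rw [Finset.sum_sub_distrib, ← Finset.sum_mul, hxs, one_mul]
    have h2 : ∑ i, lam * (x i * Real.log (x i / w i) - x i + w i * Real.exp ((c i - η) / lam))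
        = lam * ((∑ i, x i * Real.log (x i / w i)) - 1 + ∑ i, w i * Real.exp ((c i - η) / lam)) := by
      rw [← Finset.mul_sum]
      congr 1
      rw [Finset.sum_add_distrib, Finset.sum_sub_distrib, hxs]
    have h3 : ∑ i, w i * (Real.exp ((c i - η) / lam) - 1)
        = (∑ i, w i * Real.exp ((c i - η) / lam)) - 1 := by
      rw [show (fun i => w i * (Real.exp ((c i - η) / lam) - 1)) =
          fun i => w i * Real.exp ((c i - η) / lam) - w i from by funext i; ring]
      rw [Finset.sum_sub_distrib, hws]
    rw [h1, h2] at hsum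
    rw [h3]
    nlinarith [mul_le_mul_of_nonneg_left hxkl hlam.le]
  -- basic elements
  have hs0 : (∑ i, w i * c i) ∈ S := by
    refine ⟨w, fun i => (hw i).le, hws, ?_, rfl⟩
    have : ∀ i ∈ Finset.univ, w i * Real.log (w i / w i) = 0 := by
      intro i _
      rw [div_self (hw i).ne', Real.log_one, mul_zero]
    rw [Finset.sum_congr rfl this, Finset.sum_const, smul_zero]
    exact hρ.le
  -- dual elements
  have hdual : ∀ lam : ℝ, 0 < lam → (lam * Real.log (Z lam) + ρ * lam) ∈ D := by
    intro lam hlam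
    refine ⟨lam, lam * Real.log (Z lam), hlam, ?_⟩
    have hterm : ∀ i, w i * (Real.exp ((c i - lam * Real.log (Z lam)) / lam) - 1)
        = w i * Real.exp (c i / lam) / Z lam - w i := by
      intro i
      have : (c i - lam * Real.log (Z lam)) / lam = c i / lam - Real.log (Z lam) := by
        field_simp
      rw [this, Real.exp_sub, Real.exp_log (hZpos lam)]
      ring
    have hsum : ∑ i, w i * (Real.exp ((c i - lam * Real.log (Z lam)) / lam) - 1) = 0 := by
      rw [Finset.sum_congr rfl fun i _ => hterm i, Finset.sum_sub_distrib,
        ← Finset.sum_div, hws]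
      rw [show (∑ i, w i * Real.exp (c i / lam)) = Z lam from rfl, div_self (hZpos lam).ne']
      ring
    rw [hsum]
    ring
  have hd0 := hdual 1 one_pos
  have hbddS : BddAbove S := ⟨_, fun a ha => hweak a ha _ hd0⟩
  have hbddD : BddBelow D := ⟨_, fun b hb => hweak _ hs0 b hb⟩
  have hSne : S.Nonempty := ⟨_, hs0⟩
  have hDne : D.Nonempty := ⟨_, hd0⟩
  -- K equals the KL divergence of the Gibbs measure
  have hKeq : ∀ lam : ℝ, 0 < lam →
      (∑ i, (w i * Real.exp (c i / lam) / Z lam) *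
        Real.log ((w i * Real.exp (c i / lam) / Z lam) / w i)) = K lam := by
    intro lam hlam
    have hterm : ∀ i, (w i * Real.exp (c i / lam) / Z lam) *
        Real.log ((w i * Real.exp (c i / lam) / Z lam) / w i)
        = (w i * Real.exp (c i / lam) * c i) / (lam * Z lam)
          - (w i * Real.exp (c i / lam) / Z lam) * Real.log (Z lam) := by
      intro i
      have hwi := hw i
      have harg : (w i * Real.exp (c i / lam) / Z lam) / w i
          = Real.exp (c i / lam) / Z lam := by
        rw [div_div, mul_comm (Z lam) (w i), mul_div_mul_left _ _ hwi.ne']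
      rw [harg, Real.log_div (Real.exp_ne_zero _) (hZpos lam).ne', Real.log_exp]
      ring
    rw [Finset.sum_congr rfl fun i _ => hterm i, Finset.sum_sub_distrib,
      ← Finset.sum_div, ← Finset.sum_mul, ← Finset.sum_div]
    rw [show (∑ i, w i * Real.exp (c i / lam) * c i) = P lam from rfl,
      show (∑ i, w i * Real.exp (c i / lam)) = Z lam from rfl,
      div_self (hZpos lam).ne', one_mul, hKdef]
  -- primal feasible Gibbs point
  have hprimal : ∀ lam : ℝ, 0 < lam → K lam ≤ ρ →
      (lam * K lam + lam * Real.log (Z lam)) ∈ S := by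
    intro lam hlam hK
    refine ⟨fun i => w i * Real.exp (c i / lam) / Z lam, ?_, ?_, ?_, ?_⟩
    · intro i
      have := hw i
      have := hZpos lam
      positivity
    · rw [← Finset.sum_div,
        show (∑ i, w i * Real.exp (c i / lam)) = Z lam from rfl, div_self (hZpos lam).ne']
    · rw [hKeq lam hlam]; exact hK
    · have heval : ∑ i, (w i * Real.exp (c i / lam) / Z lam) * c i = P lam / Z lam := by
        calc ∑ i, (w i * Real.exp (c i / lam) / Z lam) * c i
            = ∑ i, (w i * Real.exp (c i / lam) * c i) / Z lam :=
              Finset.sum_congr rfl fun i _ => by ring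
          _ = P lam / Z lam := by rw [← Finset.sum_div]
      have hcancel : lam * (P lam / (lam * Z lam)) = P lam / Z lam := by
        rw [← mul_div_assoc, mul_div_mul_left _ _ hlam.ne']
      rw [heval, hKdef]
      simp only
      rw [mul_sub, hcancel]
      ring
  -- K is nonnegative
  have hKnn : ∀ lam : ℝ, 0 < lam → 0 ≤ K lam := by
    intro lam hlam
    rw [← hKeq lam hlam]
    have hterm : ∀ i ∈ Finset.univ, (w i * Real.exp (c i / lam) / Z lam) - w i ≤
        (w i * Real.exp (c i / lam) / Z lam) *
          Real.log ((w i * Real.exp (c i / lam) / Z lam) / w i) := by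
      intro i _
      exact xlog_aux _ _ (by have := hw i; have := hZpos lam; positivity) (hw i)
    have := Finset.sum_le_sum hterm
    rw [Finset.sum_sub_distrib, ← Finset.sum_div,
      show (∑ i, w i * Real.exp (c i / lam)) = Z lam from rfl, div_self (hZpos lam).ne',
      hws, sub_self] at this
    exact this
  -- upper bound on K
  set M : ℝ := Finset.univ.sup' hneF c with hMdef
  set m0 : ℝ := Finset.univ.inf' hneF c with hm0def
  have hm0M : m0 ≤ M :=
    le_trans (Finset.inf'_le c (Finset.mem_univ ⟨0, hm⟩))
      (Finset.le_sup' c (Finset.mem_univ ⟨0, hm⟩))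
  have hKle : ∀ lam : ℝ, 0 < lam → K lam ≤ (M - m0) / lam := by
    intro lam hlam
    have hPle : P lam ≤ M * Z lam := by
      rw [hPdef, hZdef]
      simp only
      rw [Finset.mul_sum]
      refine Finset.sum_le_sum fun i _ => ?_
      have hc : c i ≤ M := Finset.le_sup' c (Finset.mem_univ i)
      nlinarith [mul_nonneg (sub_nonneg.mpr hc)
        (mul_pos (hw i) (Real.exp_pos (c i / lam))).le]
    have hlogZ : m0 / lam ≤ Real.log (Z lam) := by
      rw [Real.le_log_iff_exp_le (hZpos lam)]
      have hrw : Real.exp (m0 / lam) = ∑ i, w i * Real.exp (m0 / lam) := by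
        rw [← Finset.sum_mul, hws, one_mul]
      rw [hrw, hZdef]
      refine Finset.sum_le_sum fun i _ => ?_
      have h1 : m0 / lam ≤ c i / lam := by
        gcongr
        exact Finset.inf'_le c (Finset.mem_univ i)
      exact mul_le_mul_of_nonneg_left (Real.exp_le_exp.mpr h1) (hw i).le
    have h1 : P lam / (lam * Z lam) ≤ M / lam := by
      rw [div_le_div_iff₀ (mul_pos hlam (hZpos lam)) hlam]
      nlinarith [mul_le_mul_of_nonneg_right hPle hlam.le]
    rw [hKdef]
    simp only
    rw [sub_div]
    linarith
  -- main case split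
  have hsup_le := csSup_le hSne fun a ha => le_csInf hDne fun b hb => hweak a ha b hb
  by_cases hcase : ∃ lam : ℝ, 0 < lam ∧ K lam = ρ
  · obtain ⟨lam, hlam, hKl⟩ := hcase
    have h1 : sInf D ≤ lam * Real.log (Z lam) + ρ * lam := csInf_le hbddD (hdual lam hlam)
    have h2 : lam * K lam + lam * Real.log (Z lam) ≤ sSup S :=
      le_csSup hbddS (hprimal lam hlam hKl.le)
    rw [hKl] at h2
    exact le_antisymm hsup_le (by linarith)
  · push_neg at hcase
    have hlt : ∀ lam : ℝ, 0 < lam → K lam < ρ := by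
      intro lam hlam
      rcases lt_or_ge (K lam) ρ with h | h
      · exact h
      exfalso
      have hKgt : ρ < K lam := lt_of_le_of_ne h fun he => hcase lam hlam he.symm
      have hd0' : (0:ℝ) ≤ (M - m0) / ρ := div_nonneg (by linarith) hρ.le
      set L : ℝ := lam + (M - m0) / ρ + 1 with hLdef
      have hL0 : 0 < L := by rw [hLdef]; linarith
      have hlamL : lam ≤ L := by rw [hLdef]; linarith
      have hKL : K L < ρ := by
        have hb := hKle L hL0
        have hb2 : (M - m0) / L < ρ := by
          rw [div_lt_iff₀ hL0, hLdef]
          have heq : ρ * ((M - m0) / ρ) = M - m0 := by field_simp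
          linarith [heq, mul_pos hρ hlam]
        exact lt_of_le_of_lt hb hb2
      have hZcont : ContinuousOn Z (Set.Icc lam L) := by
        rw [hZdef]
        apply continuousOn_finset_sum
        intro i _
        exact continuousOn_const.mul (Real.continuous_exp.comp_continuousOn
          (continuousOn_const.div continuousOn_id
            fun x hx => (lt_of_lt_of_le hlam hx.1).ne'))
      have hPcont : ContinuousOn P (Set.Icc lam L) := by
        rw [hPdef]
        apply continuousOn_finset_sum
        intro i _
        exact (continuousOn_const.mul (Real.continuous_exp.comp_continuousOn
          (continuousOn_const.div continuousOn_id
            fun x hx => (lt_of_lt_of_le hlam hx.1).ne'))).mul continuousOn_const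
      have hcont : ContinuousOn K (Set.Icc lam L) := by
        rw [hKdef]
        exact (hPcont.div (continuousOn_id.mul hZcont) fun x hx =>
            mul_ne_zero (lt_of_lt_of_le hlam hx.1).ne' (hZpos x).ne').sub
          (hZcont.log fun x hx => (hZpos x).ne')
      obtain ⟨lam', hlam'mem, hKl'⟩ :=
        intermediate_value_Icc' hlamL hcont ⟨hKL.le, hKgt.le⟩
      exact hcase lam' (lt_of_lt_of_le hlam hlam'mem.1) hKl'
    have key : ∀ ε : ℝ, 0 < ε → sInf D ≤ sSup S + ε := by
      intro ε hε
      set lam : ℝ := ε / ρ with hlamdef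
      have hlam : 0 < lam := div_pos hε hρ
      have h1 : sInf D ≤ lam * Real.log (Z lam) + ρ * lam := csInf_le hbddD (hdual lam hlam)
      have h2 : lam * K lam + lam * Real.log (Z lam) ≤ sSup S :=
        le_csSup hbddS (hprimal lam hlam (hlt lam hlam).le)
      have h3 : ρ * lam = ε := by rw [hlamdef]; field_simp
      have h4 : 0 ≤ lam * K lam := mul_nonneg hlam.le (hKnn lam hlam)
      linarith
    exact le_antisymm hsup_le (le_of_forall_pos_le_add key)
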